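/- If a, b ∈ A satisfy a - r_a = b - r_b for quasinilpotent elements r_a, r_b commuting with a and b respectively, then ϱ(a,b) = 0. -/

import Mathlib

open Filter in
noncomputable def varrho {A : Type*} [NormedRing A] (a b : A) : ℝ :=
  atTop.limsup fun n : ℕ => ‖(fun x => a * x - x * b)^[n] 1‖ ^ ((n : ℝ)⁻¹)

/-!
Write `c := a - ra = b - rb`. Everything built from `1` by `x ↦ a x - x b` commutes with `c`, and on
the commutant of `c` this map agrees with `x ↦ ra x - x rb`. The latter is `L - R` for the commuting
operators `L = ra * ·` and `R = · * rb` on `A`, whose powers have norms at most `‖ra ^ n‖` and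
`‖rb ^ n‖`. By Gelfand's formula these decay faster than any geometric sequence, and the binomial
expansion of `(L - R) ^ n` shows that so does `‖(L - R) ^ n‖`.
-/

open Filter Topology

def DecaysSuperexponentially (u : ℕ → ℝ) : Prop :=
  ∀ ε > 0, ∃ M, ∀ n, u n ≤ M * ε ^ n

namespace DecaysSuperexponentially

variable {u v : ℕ → ℝ}

lemma mono (hu : DecaysSuperexponentially u) (h : ∀ n, v n ≤ u n) :
    DecaysSuperexponentially v := fun ε hε =>
  let ⟨M, hM⟩ := hu ε hε
  ⟨M, fun n => (h n).trans (hM n)⟩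

lemma mul_const (hu : DecaysSuperexponentially u) {C : ℝ} (hC : 0 ≤ C) :
    DecaysSuperexponentially fun n => u n * C := fun ε hε =>
  let ⟨M, hM⟩ := hu ε hε
  ⟨M * C, fun n => (mul_le_mul_of_nonneg_right (hM n) hC).trans_eq (by ring)⟩

lemma of_eventually_le_pow (h : ∀ ε > 0, ∀ᶠ n in atTop, u n ≤ ε ^ n) :
    DecaysSuperexponentially u := by
  intro ε hε
  have hbdd : BddAbove (Set.range fun n => u n / ε ^ n) :=
    IsBoundedUnder.bddAbove_range ⟨1, (h ε hε).mono fun n hn =>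
      (div_le_one (pow_pos hε n)).2 hn⟩
  obtain ⟨M, hM⟩ := hbdd
  exact ⟨M, fun n => (div_le_iff₀ (pow_pos hε n)).1 (hM ⟨n, rfl⟩)⟩

lemma eventually_le_pow (hu : DecaysSuperexponentially u) {ε : ℝ} (hε : 0 < ε) :
    ∀ᶠ n in atTop, u n ≤ ε ^ n := by
  obtain ⟨M, hM⟩ := hu (ε / 2) (half_pos hε)
  filter_upwards [(tendsto_pow_atTop_atTop_of_one_lt one_lt_two).eventually_ge_atTop M]
    with n hn
  calc u n ≤ M * (ε / 2) ^ n := hM n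
    _ ≤ 2 ^ n * (ε / 2) ^ n := by gcongr
    _ = ε ^ n := by rw [← mul_pow, mul_div_cancel₀ ε two_ne_zero]

theorem iff_tendsto (hu : ∀ n, 0 ≤ u n) :
    DecaysSuperexponentially u ↔ Tendsto (fun n => u n ^ (n : ℝ)⁻¹) atTop (𝓝 0) := by
  have hroot : ∀ {n : ℕ} {ε : ℝ}, n ≠ 0 → 0 < ε → (u n ^ (n : ℝ)⁻¹ ≤ ε ↔ u n ≤ ε ^ n) :=
    fun hn hε => by
      rw [Real.rpow_inv_le_iff_of_pos (hu _) hε.le (by positivity), Real.rpow_natCast]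
  constructor
  · intro hd
    refine tendsto_order.2 ⟨fun a ha => Eventually.of_forall fun n =>
      ha.trans_le (Real.rpow_nonneg (hu n) _), fun ε hε => ?_⟩
    filter_upwards [hd.eventually_le_pow (half_pos hε), eventually_ne_atTop 0] with n hn hn0
    exact ((hroot hn0 (half_pos hε)).2 hn).trans_lt (half_lt_self hε)
  · intro ht
    refine of_eventually_le_pow fun ε hε => ?_
    filter_upwards [ht.eventually (ge_mem_nhds hε), eventually_ne_atTop 0] with n hn hn0
    exact (hroot hn0 hε).1 hn

end DecaysSuperexponentially

section NormedRing

variable {R : Type*} [NormedRing R]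

lemma norm_neg_pow (y : R) (n : ℕ) : ‖(-y) ^ n‖ = ‖y ^ n‖ := by
  rcases n.even_or_odd with h | h <;> simp [h.neg_pow]

lemma Commute.norm_add_pow_le {x y : R} (h : Commute x y) (n : ℕ) :
    ‖(x + y) ^ n‖ ≤ ∑ k ∈ Finset.range (n + 1), ‖x ^ k‖ * ‖y ^ (n - k)‖ * n.choose k := by
  rw [h.add_pow]
  refine (norm_sum_le _ _).trans (Finset.sum_le_sum fun k _ => ?_)
  rw [← nsmul_eq_mul', mul_comm]
  exact norm_nsmul_le.trans (by gcongr; exact norm_mul_le _ _)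

theorem DecaysSuperexponentially.norm_pow_add {x y : R} (h : Commute x y)
    (hx : DecaysSuperexponentially (‖x ^ ·‖)) (hy : DecaysSuperexponentially (‖y ^ ·‖)) :
    DecaysSuperexponentially (‖(x + y) ^ ·‖) := by
  intro ε hε
  obtain ⟨M, hM⟩ := hx (ε / 2) (half_pos hε)
  obtain ⟨N, hN⟩ := hy (ε / 2) (half_pos hε)
  refine ⟨M * N, fun n => (h.norm_add_pow_le n).trans ?_⟩
  calc ∑ k ∈ Finset.range (n + 1), ‖x ^ k‖ * ‖y ^ (n - k)‖ * n.choose k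
      ≤ ∑ k ∈ Finset.range (n + 1), M * (ε / 2) ^ k * (N * (ε / 2) ^ (n - k)) * n.choose k := by
        gcongr with k
        exacts [(norm_nonneg _).trans (hM k), hM k, hN _]
    _ = M * N * (ε / 2) ^ n * ∑ k ∈ Finset.range (n + 1), (n.choose k : ℝ) := by
        rw [Finset.mul_sum]
        refine Finset.sum_congr rfl fun k hk => ?_
        rw [← Nat.add_sub_of_le (Finset.mem_range_succ_iff.1 hk), pow_add, Nat.add_sub_cancel_left]
        ring
    _ = M * N * ε ^ n := by
        rw [← Nat.cast_sum, Nat.sum_range_choose, Nat.cast_pow, mul_assoc, ← mul_pow]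
        norm_num

theorem DecaysSuperexponentially.norm_pow_sub {x y : R} (h : Commute x y)
    (hx : DecaysSuperexponentially (‖x ^ ·‖)) (hy : DecaysSuperexponentially (‖y ^ ·‖)) :
    DecaysSuperexponentially (‖(x - y) ^ ·‖) := by
  simpa only [sub_eq_add_neg] using
    hx.norm_pow_add h.neg_right (by simpa only [norm_neg_pow] using hy)

end NormedRing

theorem decaysSuperexponentially_norm_pow_of_spectralRadius_eq_zero {A : Type*} [NormedRing A]
    [NormedAlgebra ℂ A] [CompleteSpace A] {r : A} (hr : spectralRadius ℂ r = 0) :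
    DecaysSuperexponentially (‖r ^ ·‖) := by
  have h := spectrum.pow_norm_pow_one_div_tendsto_nhds_spectralRadius r
  rw [hr] at h
  replace h := (ENNReal.tendsto_toReal ENNReal.zero_ne_top).comp h
  refine (DecaysSuperexponentially.iff_tendsto fun n => norm_nonneg _).2 ?_
  simpa only [Function.comp_def, one_div, ENNReal.toReal_zero,
    ENNReal.toReal_ofReal (Real.rpow_nonneg (norm_nonneg _) _)] using h

lemma iterate_add_mul_sub_mul_add_of_commute {R : Type*} [Ring R] {c ra rb x : R}
    (hra : Commute c ra) (hrb : Commute c rb) (hx : Commute c x) (n : ℕ) :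
    (fun y => (c + ra) * y - y * (c + rb))^[n] x = (fun y => ra * y - y * rb)^[n] x := by
  have hmaps : Set.MapsTo (fun y => ra * y - y * rb) {y | Commute c y} {y | Commute c y} :=
    fun y hy => (hra.mul_right hy).sub_right (hy.mul_right hrb)
  have heq : Set.EqOn (fun y => (c + ra) * y - y * (c + rb)) (fun y => ra * y - y * rb)
      {y | Commute c y} := fun y hy => by
    simp only [add_mul, mul_add, hy.eq]
    abel
  induction n with
  | zero => rfl
  | succ n ih =>
    rw [Function.iterate_succ_apply', Function.iterate_succ_apply', ih]
    exact heq (hmaps.iterate n hx)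

namespace ContinuousLinearMap

variable {A : Type*} [NormedRing A] [NormedAlgebra ℂ A]

lemma norm_mul_pow_le (r : A) (n : ℕ) : ‖mul ℂ A r ^ n‖ ≤ ‖r ^ n‖ :=
  opNorm_le_bound _ (norm_nonneg _) fun x => by
    rw [pow_apply_eq_iterate]
    exact (congrArg norm (mul_left_iterate_apply r x)).trans_le (norm_mul_le _ _)

lemma norm_flip_mul_pow_le (r : A) (n : ℕ) : ‖(mul ℂ A).flip r ^ n‖ ≤ ‖r ^ n‖ :=
  opNorm_le_bound _ (norm_nonneg _) fun x => by
    rw [pow_apply_eq_iterate]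
    exact (congrArg norm (mul_right_iterate_apply r x)).trans_le
      ((norm_mul_le _ _).trans_eq (mul_comm _ _))

lemma commute_mul_flip_mul (a b : A) : Commute (mul ℂ A a) ((mul ℂ A).flip b) :=
  ext fun x => (mul_assoc a x b).symm

end ContinuousLinearMap

open ContinuousLinearMap in
theorem decaysSuperexponentially_norm_iterate_mul_sub_mul {A : Type*} [NormedRing A]
    [NormedAlgebra ℂ A] [CompleteSpace A] {ra rb : A}
    (hra : spectralRadius ℂ ra = 0) (hrb : spectralRadius ℂ rb = 0) (x : A) :
    DecaysSuperexponentially fun n => ‖(fun y => ra * y - y * rb)^[n] x‖ := by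
  have hL : DecaysSuperexponentially (‖mul ℂ A ra ^ ·‖) :=
    (decaysSuperexponentially_norm_pow_of_spectralRadius_eq_zero hra).mono (norm_mul_pow_le ra)
  have hR : DecaysSuperexponentially (‖(mul ℂ A).flip rb ^ ·‖) :=
    (decaysSuperexponentially_norm_pow_of_spectralRadius_eq_zero hrb).mono
      (norm_flip_mul_pow_le rb)
  have hT := hL.norm_pow_sub (commute_mul_flip_mul ra rb) hR
  refine (hT.mul_const (norm_nonneg x)).mono fun n => ?_
  exact (le_opNorm _ x).trans_eq' (congrArg norm (pow_apply_eq_iterate _ n x))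

theorem stmt_6 {A : Type*} [NormedRing A] [NormedAlgebra ℂ A] [CompleteSpace A]
    (a b ra rb : A) (hra : spectralRadius ℂ ra = 0) (hrb : spectralRadius ℂ rb = 0)
    (hca : a * ra = ra * a) (hcb : b * rb = rb * b) (heq : a - ra = b - rb) :
    varrho a b = 0 := by
  obtain ⟨c, rfl⟩ : ∃ c, a = c + ra := ⟨a - ra, (sub_add_cancel a ra).symm⟩
  obtain rfl : b = c + rb := by rw [← sub_add_cancel b rb, ← heq, add_sub_cancel_right]
  have hc_ra : Commute c ra := by
    simpa using (show Commute (c + ra) ra from hca).sub_left (Commute.refl ra)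
  have hc_rb : Commute c rb := by
    simpa using (show Commute (c + rb) rb from hcb).sub_left (Commute.refl rb)
  have hdecay := decaysSuperexponentially_norm_iterate_mul_sub_mul hra hrb (1 : A)
  simp only [varrho, iterate_add_mul_sub_mul_add_of_commute hc_ra hc_rb (Commute.one_right c)]
  exact ((DecaysSuperexponentially.iff_tendsto fun _ => norm_nonneg _).1 hdecay).limsup_eq
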